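/- Let f be a real analytic function on a neighborhood of 0 in ℝ² and let x(t), t ∈ [0, ∞), be a trajectory of ∇f (dx/dt = ∇f(x(t))) with x(t) → 0 as t → ∞ and x(t) ≠ 0 for all t. Then x(t) does not spiral around the origin: there exists a continuous function θ : [0, ∞) → ℝ with x(t) = |x(t)|·(cos θ(t), sin θ(t)) for all t, and θ is bounded on [0, ∞). -/

import Mathlib

/-!
In complex coordinates `z = x₀ + i x₁` the angle of the trajectory satisfies `θ' = G(z) / |z|²`,
where `G = ∂f/∂α` is the angular derivative of `f`. It is real analytic near `0` and has mean zero
on every small circle `|ζ| = r`, being the derivative of the periodic function `α ↦ f(r e^{iα})`.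

Suppose `θ` is unbounded above. Given a direction `ω` and a time `T`, take the first time after `T`
at which `θ` reaches a level `arg ω + 2πk` lying above `θ(T)`: there `θ' ≥ 0` and `z` lies on the
ray through `ω`. As `z → 0`, this gives arbitrarily small `r > 0` with `G(rω) ≥ 0`. Then the
lowest-order nonvanishing homogeneous term of `G` would be nonnegative on the unit circle with
mean zero, which forces it to vanish. So `G ≡ 0` near `0` and `θ` is eventually constant, a
contradiction. Unboundedness below is the mirror image under complex conjugation.
-/

open Filter Topology Real Set Metric Complex Asymptotics ComplexConjugate

theorem FormalMultilinearSeries.apply_smul_diag {𝕜 E F : Type*} [NontriviallyNormedField 𝕜]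
    [NormedAddCommGroup E] [NormedSpace 𝕜 E] [NormedAddCommGroup F] [NormedSpace 𝕜 F]
    (p : FormalMultilinearSeries 𝕜 E F) (n : ℕ) (c : 𝕜) (y : E) :
    p n (fun _ => c • y) = c ^ n • p n (fun _ => y) := by
  simpa using (p n).map_smul_univ (fun _ => c) (fun _ => y)

theorem HasFPowerSeriesAt.isBigO_sub_apply_diag {𝕜 E F : Type*} [NontriviallyNormedField 𝕜]
    [NormedAddCommGroup E] [NormedSpace 𝕜 E] [NormedAddCommGroup F] [NormedSpace 𝕜 F]
    {f : E → F} {p : FormalMultilinearSeries 𝕜 E F} {x : E} (hf : HasFPowerSeriesAt f p x)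
    {n : ℕ} (hp : ∀ j < n, ∀ y, p j (fun _ => y) = 0) :
    (fun y => f (x + y) - p n (fun _ => y)) =O[𝓝 0] fun y => ‖y‖ ^ (n + 1) := by
  have hsum : p.partialSum (n + 1) = fun y => p n (fun _ => y) := by
    funext y
    rw [FormalMultilinearSeries.partialSum, Finset.sum_range_succ,
      Finset.sum_eq_zero fun j hj => hp j (Finset.mem_range.mp hj) y, zero_add]
  simpa only [hsum] using hf.isBigO_sub_partialSum_pow (n + 1)

theorem nonneg_of_frequently_nonneg_add_mul {a C : ℝ}
    (h : ∃ᶠ r in 𝓝[>] (0 : ℝ), 0 ≤ a + C * r) : 0 ≤ a := by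
  have hlim : Tendsto (fun r => a + C * r) (𝓝[>] 0) (𝓝 a) :=
    ((continuous_const.add (continuous_const.mul continuous_id')).tendsto' 0 a (by simp)).mono_left
      nhdsWithin_le_nhds
  exact isClosed_Ici.mem_of_frequently_of_tendsto h hlim

theorem eqOn_zero_of_nonneg_of_circleAverage_eq_zero {h : ℂ → ℝ} (hc : Continuous h)
    (hnonneg : ∀ ω ∈ sphere (0 : ℂ) 1, 0 ≤ h ω) (havg : circleAverage h 0 1 = 0) :
    EqOn h 0 (sphere 0 1) := by
  intro ω hω
  refine (hnonneg ω hω).antisymm' (not_lt.mp fun hpos => ?_)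
  have hω' : circleMap 0 1 (0 + arg ω) = ω := by
    simpa [circleMap_zero, mem_sphere_zero_iff_norm.mp hω] using norm_mul_exp_arg_mul_I ω
  have hint : 0 < ∫ θ in 0..2 * π, h (circleMap 0 1 (θ + arg ω)) :=
    intervalIntegral.integral_pos two_pi_pos (by fun_prop)
      (fun θ _ => hnonneg _ (by simp)) ⟨0, ⟨le_rfl, two_pi_pos.le⟩, by rwa [hω']⟩
  have := circleAverage_eq_integral_add (f := h) (c := 0) (R := 1) (arg ω)
  rw [havg, smul_eq_mul] at this
  exact (mul_pos (inv_pos.mpr two_pi_pos) hint).ne' this.symm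

section LeadingTerm

variable {G : ℂ → ℝ} {P : FormalMultilinearSeries ℝ ℂ ℝ} {n : ℕ}

theorem HasFPowerSeriesAt.exists_bound_sub_apply_diag (hP : HasFPowerSeriesAt G P 0)
    (hn : ∀ j < n, ∀ y, P j (fun _ => y) = 0) :
    ∃ C, ∀ᶠ y in 𝓝 0, |G y - P n (fun _ => y)| ≤ C * ‖y‖ ^ (n + 1) := by
  obtain ⟨C, hC⟩ := (hP.isBigO_sub_apply_diag hn).bound
  exact ⟨C, by simpa using hC⟩

theorem HasFPowerSeriesAt.apply_diag_nonneg (hP : HasFPowerSeriesAt G P 0)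
    (hn : ∀ j < n, ∀ y, P j (fun _ => y) = 0) {ω : ℂ}
    (hω : ∃ᶠ r : ℝ in 𝓝[>] 0, 0 ≤ G (r * ω)) : 0 ≤ P n (fun _ => ω) := by
  obtain ⟨C, hC⟩ := hP.exists_bound_sub_apply_diag hn
  have hray : Tendsto (fun r : ℝ => (r : ℂ) * ω) (𝓝[>] 0) (𝓝 0) :=
    ((by fun_prop : Continuous fun r : ℝ => (r : ℂ) * ω).tendsto' 0 0 (by simp)).mono_left
      nhdsWithin_le_nhds
  refine nonneg_of_frequently_nonneg_add_mul (C := C * ‖ω‖ ^ (n + 1)) <|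
    ((hω.and_eventually (hray.eventually hC)).and_eventually self_mem_nhdsWithin).mono ?_
  rintro r ⟨⟨hG, hle⟩, hr⟩
  have hdiag : P n (fun _ => (r : ℂ) * ω) = r ^ n * P n (fun _ => ω) := by
    rw [← real_smul, P.apply_smul_diag, smul_eq_mul]
  rw [hdiag, norm_mul, norm_real, Real.norm_of_nonneg hr.le] at hle
  have hsum : 0 ≤ r ^ n * (P n (fun _ => ω) + C * ‖ω‖ ^ (n + 1) * r) := by
    have hexp : r ^ n * (P n (fun _ => ω) + C * ‖ω‖ ^ (n + 1) * r)
        = r ^ n * P n (fun _ => ω) + C * (r * ‖ω‖) ^ (n + 1) := by ring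
    linarith [(abs_le.mp hle).2]
  exact nonneg_of_mul_nonneg_right hsum (pow_pos hr n)

theorem HasFPowerSeriesAt.circleAverage_apply_diag_eq_zero (hP : HasFPowerSeriesAt G P 0)
    (hn : ∀ j < n, ∀ y, P j (fun _ => y) = 0)
    (hmean : ∀ᶠ r in 𝓝[>] (0 : ℝ), circleAverage G 0 r = 0) :
    circleAverage (fun ω => P n (fun _ => ω)) 0 1 = 0 := by
  set h : ℂ → ℝ := fun ω => P n (fun _ => ω)
  have hc : Continuous h := by fun_prop
  obtain ⟨C, hC⟩ := hP.exists_bound_sub_apply_diag hn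
  obtain ⟨ε, hε, hball⟩ := Metric.eventually_nhds_iff_ball.mp
    (hC.and (hP.analyticAt.eventually_analyticAt.mono fun _ hy => hy.continuousAt))
  have hsmall : ∀ᶠ r in 𝓝[>] (0 : ℝ), |circleAverage h 0 1| ≤ C * r := by
    filter_upwards [hmean, Ioo_mem_nhdsGT hε] with r hr hrε
    have hsphere : ∀ y ∈ sphere (0 : ℂ) |r|, y ∈ ball (0 : ℂ) ε := fun y hy => by
      rw [mem_sphere_zero_iff_norm, abs_of_pos hrε.1] at hy
      rw [mem_ball_zero_iff, hy]; exact hrε.2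
    have hGc : ContinuousOn G (sphere 0 |r|) := fun y hy =>
      ((hball y (hsphere y hy)).2).continuousWithinAt
    have hscale : circleAverage h 0 r = r ^ n * circleAverage h 0 1 := by
      rw [circleAverage_eq_circleAverage_zero_one, ← smul_eq_mul, ← circleAverage_fun_smul]
      congr 1 with ω
      simp only [h, add_zero, ← real_smul, P.apply_smul_diag]
    have hdiff : |circleAverage h 0 r - circleAverage G 0 r| ≤ C * r ^ (n + 1) := by
      rw [← circleAverage_fun_sub hc.continuousOn.circleIntegrable' hGc.circleIntegrable']
      refine abs_circleAverage_le_circleAverage_abs.trans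
        (circleAverage_mono_on_of_le_circle ?_ fun y hy => ?_)
      · exact ((hc.continuousOn.sub hGc).abs).circleIntegrable'
      · have hy' := (hball y (hsphere y hy)).1
        rw [mem_sphere_zero_iff_norm, abs_of_pos hrε.1] at hy
        rw [Pi.abs_apply, abs_sub_comm, ← hy]
        exact hy'
    rw [hr, sub_zero, hscale, abs_mul, abs_of_pos (pow_pos hrε.1 n), pow_succ] at hdiff
    nlinarith [pow_pos hrε.1 n]
  refine abs_nonpos_iff.mp (neg_nonneg.mp (nonneg_of_frequently_nonneg_add_mul (C := C) ?_))
  exact hsmall.frequently.mono fun r hr => by linarith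

end LeadingTerm

theorem AnalyticAt.eventuallyEq_zero_of_circleAverage_eq_zero_of_frequently_nonneg {G : ℂ → ℝ}
    (hG : AnalyticAt ℝ G 0) (hmean : ∀ᶠ r in 𝓝[>] (0 : ℝ), circleAverage G 0 r = 0)
    (hfreq : ∀ ω : ℂ, ‖ω‖ = 1 → ∃ᶠ r : ℝ in 𝓝[>] 0, 0 ≤ G (r * ω)) :
    G =ᶠ[𝓝 0] 0 := by
  obtain ⟨P, hP⟩ := hG
  have hdiag : ∀ n y, P n (fun _ => y) = 0 := by
    intro n
    induction n using Nat.strong_induction_on with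
    | _ n ih =>
      have hunit := eqOn_zero_of_nonneg_of_circleAverage_eq_zero (by fun_prop)
        (fun ω hω => hP.apply_diag_nonneg ih (hfreq ω (mem_sphere_zero_iff_norm.mp hω)))
        (hP.circleAverage_apply_diag_eq_zero ih hmean)
      intro y
      have hy : P n (fun _ => exp (arg y * I)) = 0 := hunit (by simp [norm_exp_ofReal_mul_I])
      rw [← norm_mul_exp_arg_mul_I y, ← real_smul, P.apply_smul_diag, hy, smul_zero]
  filter_upwards [hP.eventually_hasSum] with y hy
  rw [zero_add] at hy
  show G y = 0
  exact hy.unique (by simpa only [hdiag] using hasSum_zero)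

/-- `∂F/∂α` in polar coordinates `ζ = r e^{iα}`. -/
noncomputable def angularDeriv {E : Type*} [NormedAddCommGroup E] [NormedSpace ℝ E]
    (F : ℂ → E) (ζ : ℂ) : E :=
  fderiv ℝ F ζ (ζ * I)

section AngularDeriv

variable {E : Type*} [NormedAddCommGroup E] [NormedSpace ℝ E] [CompleteSpace E] {F : ℂ → E}

theorem circleAverage_angularDeriv_eq_zero {R : ℝ}
    (hF : ∀ ζ ∈ sphere (0 : ℂ) |R|, ContDiffAt ℝ 1 F ζ) :
    circleAverage (angularDeriv F) 0 R = 0 := by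
  have hderiv : ∀ θ, HasDerivAt (fun θ => F (circleMap 0 R θ))
      (angularDeriv F (circleMap 0 R θ)) θ := fun θ =>
    ((hF _ (circleMap_mem_sphere' 0 R θ)).differentiableAt one_ne_zero).hasFDerivAt
      |>.comp_hasDerivAt θ (hasDerivAt_circleMap 0 R θ)
  have hcont : Continuous fun θ => angularDeriv F (circleMap 0 R θ) := by
    refine continuous_iff_continuousAt.mpr fun θ => ?_
    have hF' := (hF _ (circleMap_mem_sphere' 0 R θ)).continuousAt_fderiv one_ne_zero
    unfold angularDeriv
    fun_prop
  rw [circleAverage_def, intervalIntegral.integral_eq_sub_of_hasDerivAt (fun θ _ => hderiv θ)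
    (hcont.intervalIntegrable _ _)]
  simpa [sub_eq_zero] using congrArg F (periodic_circleMap 0 R 0)

theorem AnalyticAt.eventually_circleAverage_angularDeriv_eq_zero (hF : AnalyticAt ℝ F 0) :
    ∀ᶠ r in 𝓝 0, circleAverage (angularDeriv F) 0 r = 0 := by
  obtain ⟨ε, hε, hball⟩ := Metric.eventually_nhds_iff_ball.mp hF.eventually_analyticAt
  filter_upwards [Metric.ball_mem_nhds 0 hε] with r hr
  refine circleAverage_angularDeriv_eq_zero fun ζ hζ => (hball ζ ?_).contDiffAt
  rw [mem_ball_zero_iff] at hr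
  exact sphere_subset_ball hr hζ

theorem AnalyticAt.angularDeriv {c : ℂ} (hF : AnalyticAt ℝ F c) :
    AnalyticAt ℝ (angularDeriv F) c :=
  (ContinuousLinearMap.apply ℝ E).analyticAt_bilinear _ |>.comp₂ (by fun_prop) hF.fderiv

end AngularDeriv

theorem exists_angle_lift {z z' : ℝ → ℂ} (hz : ∀ t ≥ 0, HasDerivAt z (z' t) t)
    (hz' : ContinuousOn z' (Ici 0)) (hz0 : ∀ t ≥ 0, z t ≠ 0) :
    ∃ θ : ℝ → ℝ, Continuous θ ∧ (∀ t ≥ 0, z t = ‖z t‖ * exp (θ t * I)) ∧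
      ∀ t ≥ 0, HasDerivAt θ (z' t / z t).im t := by
  set φ : ℝ → ℂ := fun s => z' (max s 0) / z (max s 0)
  have hφc : Continuous φ := by
    have hzc : ContinuousOn z (Ici 0) := fun t ht => (hz t ht).continuousAt.continuousWithinAt
    exact (hz'.div hzc hz0).comp_continuous (continuous_id.max continuous_const)
      fun s => le_max_right s 0
  have hφ : ∀ t ≥ 0, φ t = z' t / z t := fun t ht => by simp only [φ, max_eq_left ht]
  set w : ℝ → ℂ := fun t => ∫ s in 0..t, φ s
  have hw : ∀ t, HasDerivAt w (φ t) t := fun t => (hφc.integral_hasStrictDerivAt 0 t).hasDerivAt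
  -- `z * exp (-w)` has derivative zero, so `z = z 0 * exp w`
  have hzw : ∀ t ≥ 0, z t = z 0 * exp (w t) := by
    intro t ht
    have hconst := constant_of_has_deriv_right_zero (f := fun s => z s * exp (-w s))
      (fun s hs => ((hz s hs.1).continuousAt.mul
        ((hw s).neg.cexp.continuousAt)).continuousWithinAt)
      (fun s hs => by
        have hd : HasDerivAt (fun s => z s * exp (-w s))
            (z' s * exp (-w s) + z s * (exp (-w s) * -φ s)) s := (hz s hs.1).mul (hw s).neg.cexp
        have h0 : z' s * exp (-w s) + z s * (exp (-w s) * -φ s) = 0 := by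
          rw [hφ s hs.1]
          field_simp [hz0 s hs.1]
          ring
        exact (h0 ▸ hd).hasDerivWithinAt) t ⟨ht, le_rfl⟩
    have hw0 : w 0 = 0 := intervalIntegral.integral_same
    rw [hw0, neg_zero, Complex.exp_zero, mul_one] at hconst
    rw [← hconst, mul_assoc, ← Complex.exp_add, neg_add_cancel, Complex.exp_zero, mul_one]
  refine ⟨fun t => arg (z 0) + (w t).im, by fun_prop, fun t ht => ?_, fun t ht => ?_⟩
  · calc z t = ‖z 0‖ * exp (arg (z 0) * I) * exp ((w t).re + (w t).im * I) := by
          rw [norm_mul_exp_arg_mul_I, re_add_im, hzw t ht]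
      _ = ↑(‖z 0‖ * Real.exp (w t).re) * exp (↑(arg (z 0) + (w t).im) * I) := by
          push_cast
          rw [Complex.exp_add, add_mul, Complex.exp_add]
          ring
      _ = ‖z t‖ * exp (↑(arg (z 0) + (w t).im) * I) := by
          rw [hzw t ht, norm_mul, norm_exp]
  · rw [← hφ t ht]
    exact (imCLM.hasFDerivAt.comp_hasDerivAt t (hw t)).const_add (arg (z 0))

theorem Complex.im_div_eq_inner (w z : ℂ) : (w / z).im = inner ℝ (z * I) w / ‖z‖ ^ 2 := by
  rw [Complex.inner, div_im, normSq_eq_norm_sq]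
  simp only [mul_re, mul_im, conj_re, conj_im, I_re, I_im]
  ring

theorem exists_angle_of_hasDerivAt_gradient {F : ℂ → ℝ} {V : Set ℂ} {z : ℝ → ℂ} (hV : IsOpen V)
    (hF : ContDiffOn ℝ 1 F V) (hz : ∀ t ≥ 0, z t ∈ V ∧ HasDerivAt z (gradient F (z t)) t)
    (hz0 : ∀ t ≥ 0, z t ≠ 0) :
    ∃ θ : ℝ → ℝ, Continuous θ ∧ (∀ t ≥ 0, z t = ‖z t‖ * exp (θ t * I)) ∧
      ∀ t ≥ 0, HasDerivAt θ (angularDeriv F (z t) / ‖z t‖ ^ 2) t := by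
  have hgrad : ContinuousOn (gradient F) V :=
    (InnerProductSpace.toDual ℝ ℂ).symm.continuous.comp_continuousOn
      (hF.continuousOn_fderiv_of_isOpen hV le_rfl)
  obtain ⟨θ, hθc, hpolar, hθd⟩ := exists_angle_lift (fun t ht => (hz t ht).2)
    (hgrad.comp (fun t ht => (hz t ht).2.continuousAt.continuousWithinAt) fun t ht => (hz t ht).1)
    hz0
  refine ⟨θ, hθc, hpolar, fun t ht => ?_⟩
  simpa [angularDeriv, im_div_eq_inner, inner_gradient_right] using hθd t ht

section Hitting

variable {θ q : ℝ → ℝ}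

theorem exists_eq_of_lt_of_le_of_hasDerivAt_nonneg {a b L : ℝ} (hab : a ≤ b)
    (hθc : ContinuousOn θ (Icc a b)) (hθd : ∀ t ∈ Ioc a b, HasDerivAt θ (q t) t)
    (ha : θ a < L) (hb : L ≤ θ b) : ∃ t ∈ Ioc a b, θ t = L ∧ 0 ≤ q t := by
  -- `t` is the first time in `[a, b]` at which `θ` reaches `L`
  have hS : IsCompact {s ∈ Icc a b | L ≤ θ s} :=
    isCompact_Icc.of_isClosed_subset (hθc.preimage_isClosed_of_isClosed isClosed_Icc isClosed_Ici)
      (sep_subset _ _)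
  obtain ⟨t, ⟨⟨hat, htb⟩, hLt⟩, hmin⟩ := hS.exists_isLeast ⟨b, ⟨⟨hab, le_rfl⟩, hb⟩⟩
  have hbefore : ∀ s ∈ Ico a t, θ s < L := fun s hs =>
    not_le.mp fun hLs => (hmin ⟨⟨hs.1, hs.2.le.trans htb⟩, hLs⟩).not_gt hs.2
  have hat' : a < t := hat.lt_of_ne fun h => (h ▸ hLt).not_gt ha
  obtain ⟨s, hs, hθs⟩ :=
    intermediate_value_Icc hat (hθc.mono (Icc_subset_Icc_right htb)) ⟨ha.le, hLt⟩
  have hθt : θ t = L := by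
    rcases hs.2.lt_or_eq with hst | rfl
    · exact absurd hθs (hbefore s ⟨hs.1, hst⟩).ne
    · exact hθs
  refine ⟨t, ⟨hat', htb⟩, hθt, ?_⟩
  refine ge_of_tendsto ((hasDerivAt_iff_tendsto_slope.mp (hθd t ⟨hat', htb⟩)).mono_left
    (nhdsLT_le_nhdsNE t)) ?_
  filter_upwards [Ioo_mem_nhdsLT hat'] with s hs
  rw [slope_def_field, hθt]
  exact div_nonneg_of_nonpos (by linarith [hbefore s ⟨hs.1.le, hs.2⟩]) (by linarith [hs.2])

theorem exists_gt_eq_add_int_mul_two_pi_of_not_bddAbove (hθc : ContinuousOn θ (Ici 0))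
    (hθd : ∀ t > 0, HasDerivAt θ (q t) t) (hθ : ¬BddAbove (θ '' Ici 0)) (α : ℝ) {T : ℝ}
    (hT : 0 ≤ T) : ∃ t > T, ∃ k : ℤ, θ t = α + k * (2 * π) ∧ 0 ≤ q t := by
  obtain ⟨k, hk⟩ := exists_int_gt ((θ T - α) / (2 * π))
  have hlevel : θ T < α + k * (2 * π) := by
    rw [div_lt_iff₀ two_pi_pos] at hk
    linarith
  have hθT : ¬BddAbove (θ '' Ici T) := fun hbdd => hθ <| by
    rw [← Icc_union_Ici_eq_Ici hT, image_union]
    exact ((isCompact_Icc.image_of_continuousOn (hθc.mono Icc_subset_Ici_self)).bddAbove).union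
      hbdd
  obtain ⟨_, ⟨b, hTb, rfl⟩, hb⟩ := not_bddAbove_iff.mp hθT (α + k * (2 * π))
  obtain ⟨t, ⟨hTt, htb⟩, hθt, hq⟩ := exists_eq_of_lt_of_le_of_hasDerivAt_nonneg hTb
    (hθc.mono fun s hs => hT.trans hs.1) (fun t ht => hθd t (hT.trans_lt ht.1)) hlevel hb.le
  exact ⟨t, hTt, k, hθt, hq⟩

end Hitting

section Angle

variable {z : ℝ → ℂ} {θ : ℝ → ℝ} {G : ℂ → ℝ}

theorem frequently_nonneg_of_not_bddAbove (hz0 : ∀ t ≥ 0, z t ≠ 0)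
    (hpolar : ∀ t ≥ 0, z t = ‖z t‖ * exp (θ t * I)) (hlim : Tendsto z atTop (𝓝 0))
    (hθc : ContinuousOn θ (Ici 0)) (hθd : ∀ t > 0, HasDerivAt θ (G (z t) / ‖z t‖ ^ 2) t)
    (hθ : ¬BddAbove (θ '' Ici 0)) {ω : ℂ} (hω : ‖ω‖ = 1) :
    ∃ᶠ r : ℝ in 𝓝[>] 0, 0 ≤ G (r * ω) := by
  rw [(nhdsGT_basis (0 : ℝ)).frequently_iff]
  intro δ hδ
  obtain ⟨T, hT⟩ := eventually_atTop.mp (hlim.eventually (ball_mem_nhds 0 hδ))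
  obtain ⟨t, hTt, k, hθt, hq⟩ :=
    exists_gt_eq_add_int_mul_two_pi_of_not_bddAbove hθc hθd hθ (arg ω) (le_max_right T 0)
  have ht : 0 ≤ t := (le_max_right T 0).trans hTt.le
  have hzt : 0 < ‖z t‖ := norm_pos_iff.mpr (hz0 t ht)
  refine ⟨‖z t‖, ⟨hzt, by simpa using hT t ((le_max_left T 0).trans hTt.le)⟩, ?_⟩
  have hray : (‖z t‖ : ℂ) * ω = z t := by
    conv_rhs => rw [hpolar t ht, hθt]
    congr 1
    conv_lhs => rw [← norm_mul_exp_arg_mul_I ω, hω]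
    push_cast
    rw [one_mul]
    exact (exp_mul_I_periodic.int_mul k _).symm
  rw [hray]
  simpa using (le_div_iff₀ (pow_pos hzt 2)).mp hq

theorem frequently_nonpos_of_not_bddBelow (hz0 : ∀ t ≥ 0, z t ≠ 0)
    (hpolar : ∀ t ≥ 0, z t = ‖z t‖ * exp (θ t * I)) (hlim : Tendsto z atTop (𝓝 0))
    (hθc : ContinuousOn θ (Ici 0)) (hθd : ∀ t > 0, HasDerivAt θ (G (z t) / ‖z t‖ ^ 2) t)
    (hθ : ¬BddBelow (θ '' Ici 0)) {ω : ℂ} (hω : ‖ω‖ = 1) :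
    ∃ᶠ r : ℝ in 𝓝[>] 0, G (r * ω) ≤ 0 := by
  have hθ' : ¬BddAbove ((fun t => -θ t) '' Ici 0) := fun ⟨M, hM⟩ =>
    hθ ⟨-M, by rintro _ ⟨t, ht, rfl⟩; linarith [hM ⟨t, ht, rfl⟩]⟩
  have hfreq := frequently_nonneg_of_not_bddAbove (z := fun t => conj (z t))
    (G := fun ζ => -G (conj ζ)) (fun t ht => (map_ne_zero _).mpr (hz0 t ht))
    (fun t ht => by
      conv_lhs => rw [hpolar t ht]
      simp [← exp_conj])
    (by simpa using hlim.star) hθc.neg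
    (fun t ht => by simpa [neg_div] using (hθd t ht).neg) hθ' (ω := conj ω) (by simpa using hω)
  simpa using hfreq

theorem isBounded_image_Ici_of_eventually_hasDerivAt_zero (hθc : ContinuousOn θ (Ici 0))
    (hθ : ∀ᶠ t in atTop, HasDerivAt θ 0 t) : Bornology.IsBounded (θ '' Ici 0) := by
  obtain ⟨T, hT⟩ := eventually_atTop.mp hθ
  have hconst : ∀ t ∈ Ici (max T 0), θ t = θ (max T 0) := fun t ht =>
    constant_of_has_deriv_right_zero (hθc.mono fun s hs => (le_max_right T 0).trans hs.1)
      (fun s hs => (hT s ((le_max_left T 0).trans hs.1)).hasDerivWithinAt) t ⟨ht, le_rfl⟩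
  rw [← Icc_union_Ici_eq_Ici (le_max_right T 0), image_union]
  refine (isCompact_Icc.image_of_continuousOn (hθc.mono Icc_subset_Ici_self)).isBounded.union
    ((Bornology.isBounded_singleton (x := θ (max T 0))).subset ?_)
  rintro _ ⟨t, ht, rfl⟩
  exact hconst t ht

theorem isBounded_angle_of_circleAverage_eq_zero (hG : AnalyticAt ℝ G 0)
    (hmean : ∀ᶠ r in 𝓝[>] (0 : ℝ), circleAverage G 0 r = 0) (hz0 : ∀ t ≥ 0, z t ≠ 0)
    (hpolar : ∀ t ≥ 0, z t = ‖z t‖ * exp (θ t * I)) (hlim : Tendsto z atTop (𝓝 0))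
    (hθc : ContinuousOn θ (Ici 0)) (hθd : ∀ t > 0, HasDerivAt θ (G (z t) / ‖z t‖ ^ 2) t) :
    Bornology.IsBounded (θ '' Ici 0) := by
  have hbdd : G =ᶠ[𝓝 0] 0 → Bornology.IsBounded (θ '' Ici 0) := fun hG0 =>
    isBounded_image_Ici_of_eventually_hasDerivAt_zero hθc <| by
      filter_upwards [hlim.eventually hG0, eventually_gt_atTop 0] with t ht ht0
      simpa [ht] using hθd t ht0
  rw [isBounded_iff_bddBelow_bddAbove]
  refine ⟨by_contra fun hθ => hθ (hbdd ?_).bddBelow, by_contra fun hθ => hθ (hbdd ?_).bddAbove⟩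
  · have hmean' : ∀ᶠ r in 𝓝[>] (0 : ℝ), circleAverage (fun ζ => -G ζ) 0 r = 0 :=
      hmean.mono fun r hr => by
        simpa [hr] using circleAverage_fun_smul (f := G) (c := 0) (R := r) (a := (-1 : ℝ))
    have hneg := hG.neg.eventuallyEq_zero_of_circleAverage_eq_zero_of_frequently_nonneg hmean'
      fun ω hω => (frequently_nonpos_of_not_bddBelow hz0 hpolar hlim hθc hθd hθ hω).mono
        fun r hr => neg_nonneg.mpr hr
    exact hneg.mono fun y hy => neg_eq_zero.mp hy
  · exact hG.eventuallyEq_zero_of_circleAverage_eq_zero_of_frequently_nonneg hmean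
      fun ω hω => frequently_nonneg_of_not_bddAbove hz0 hpolar hlim hθc hθd hθ hω

end Angle

theorem LinearIsometryEquiv.gradient_comp {E F : Type*} [NormedAddCommGroup E]
    [InnerProductSpace ℝ E] [CompleteSpace E] [NormedAddCommGroup F] [InnerProductSpace ℝ F]
    [CompleteSpace F] (Φ : E ≃ₗᵢ[ℝ] F) (f : F → ℝ) (x : E) :
    gradient (f ∘ Φ) x = Φ.symm (gradient f (Φ x)) := by
  refine ext_inner_right ℝ fun v => ?_
  rw [inner_gradient_left, LinearIsometryEquiv.inner_map_eq_flip, LinearIsometryEquiv.symm_symm,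
    inner_gradient_left]
  exact congrArg (· v) (Φ.toContinuousLinearEquiv.comp_right_fderiv (f := f) (x := x))

/-- **Non-spiraling in dimension 2.** Let `f` be real analytic on a neighborhood of `0` in
`ℝ²` and let `x(t)`, `t ∈ [0, ∞)`, be a trajectory of `∇f` with `x(t) → 0` as `t → ∞` and
`x(t) ≠ 0` for all `t ≥ 0`. Then `x(t)` does not spiral around the origin: there is a
continuous angle function `θ` on `[0, ∞)` with
`x(t) = |x(t)|·(cos θ(t), sin θ(t))`, and `θ` is bounded on `[0, ∞)`. -/
theorem no_spiraling_dim_two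
    (U : Set (EuclideanSpace ℝ (Fin 2))) (hU : IsOpen U) (h0U : (0 : EuclideanSpace ℝ (Fin 2)) ∈ U)
    (f : EuclideanSpace ℝ (Fin 2) → ℝ) (hf : AnalyticOnNhd ℝ f U)
    (x : ℝ → EuclideanSpace ℝ (Fin 2))
    (hx : ∀ t : ℝ, 0 ≤ t → x t ∈ U ∧ HasDerivAt x (gradient f (x t)) t)
    (hne : ∀ t : ℝ, 0 ≤ t → x t ≠ 0)
    (hlim : Tendsto x atTop (𝓝 0)) :
    ∃ θ : ℝ → ℝ, ContinuousOn θ (Set.Ici 0) ∧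
      (∀ t : ℝ, 0 ≤ t →
        x t 0 = ‖x t‖ * Real.cos (θ t) ∧ x t 1 = ‖x t‖ * Real.sin (θ t)) ∧
      ∃ C : ℝ, ∀ t : ℝ, 0 ≤ t → |θ t| ≤ C := by
  set Φ := Complex.orthonormalBasisOneI.repr
  set z : ℝ → ℂ := fun t => Φ.symm (x t)
  have hF : AnalyticOnNhd ℝ (f ∘ Φ) (Φ ⁻¹' U) :=
    hf.comp (Φ.toContinuousLinearEquiv.toContinuousLinearMap.analyticOnNhd _) (mapsTo_preimage _ _)
  have hz : ∀ t ≥ 0, z t ∈ Φ ⁻¹' U ∧ HasDerivAt z (gradient (f ∘ Φ) (z t)) t := fun t ht => by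
    rw [Φ.gradient_comp, Φ.apply_symm_apply]
    exact ⟨by simpa [z] using (hx t ht).1,
      Φ.symm.toContinuousLinearEquiv.hasFDerivAt.comp_hasDerivAt t (hx t ht).2⟩
  have hz0 : ∀ t ≥ 0, z t ≠ 0 := fun t ht => by simpa [z] using hne t ht
  obtain ⟨θ, hθc, hpolar, hθd⟩ := exists_angle_of_hasDerivAt_gradient
    (hU.preimage Φ.continuous) hF.contDiffOn_of_completeSpace hz hz0
  have h0 : AnalyticAt ℝ (f ∘ Φ) 0 := hF 0 (by simpa using h0U)
  obtain ⟨C, hC⟩ := (isBounded_angle_of_circleAverage_eq_zero h0.angularDeriv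
    (nhdsWithin_le_nhds h0.eventually_circleAverage_angularDeriv_eq_zero) hz0 hpolar
    ((Φ.symm.continuous.tendsto' 0 0 (map_zero _)).comp hlim) hθc.continuousOn
    fun t ht => hθd t ht.le).exists_norm_le
  refine ⟨θ, hθc.continuousOn, fun t ht => ?_, C, fun t ht => hC _ ⟨t, ht, rfl⟩⟩
  have hpt := hpolar t ht
  rw [show ‖z t‖ = ‖x t‖ from Φ.symm.norm_map (x t)] at hpt
  exact ⟨by simpa [z, Φ] using congrArg re hpt, by simpa [z, Φ] using congrArg im hpt⟩
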